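/- With the same set-up, if $f\in X^*$ satisfies $\theta(f) < \infty$ and $m\in\mathbb{N}$, then there exist $\lambda_n \ge 0$ for $n > m$ with $\sum_{n=m+1}^\infty \lambda_n = 1$ and $f = \sum_{n=m+1}^\infty \lambda_n j_{m,n}(f)$, where $j_{m,n}(f) = h_m(f) + g_{m,n}(f)$ and $g_{m,n}(f) = \frac{\theta(f-h_m(f))}{\rho(G_n(f))}\omega_n(f)$ if $p_n(f)>0$ and $g_{m,n}(f)=0$ otherwise. -/

import Mathlib

/-!
Let `p_1 ≥ p_2 ≥ ⋯` enumerate the distinct norms of the non-zero components `P_γ^* f`.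
Only finitely many components exceed any `ε > 0`, so every component norm is some
`p_{j+1}`, and `γ ∈ G_{k+1}` exactly when `j ≤ k`. Telescoping the `q_k` then shows that
`f - h_m(f)` is `f` with each component truncated to norm `min(p_{m+1}, ‖P_γ^* f‖)`.

Two consequences drive the proof. The components of `f - h_m(f)` tend to `0`, which
together with `‖q_k ω_k‖ ≤ q_k ρ(G_k)` and `θ(f) < ∞` gives `f = ∑ q_k ω_k`. And the
truncated functional has `p_{k+1}(f - h_m) = p_{m+k+1}(f)` with the same sets `G`, so
`θ(f - h_m(f)) = ∑_{n>m} q_n ρ(G_n)`. The weights `λ_n = q_n ρ(G_n) / θ(f - h_m(f))` then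
sum to `1` and satisfy `λ_n g_{m,n} = q_n ω_n`.
-/

open Filter
open scoped ENNReal NNReal

noncomputable section

variable {X : Type*} [NormedAddCommGroup X] [NormedSpace ℝ X] {Γ : Type*}

/-- The adjoint action: `P γ* f = f ∘ P γ`. -/
def Pstar (P : Γ → X →L[ℝ] X) (γ : Γ) (f : StrongDual ℝ X) : StrongDual ℝ X :=
  f.comp (P γ)

/-- The range of `f`: the set of norms of its non-zero components. -/
def ranSet (P : Γ → X →L[ℝ] X) (f : StrongDual ℝ X) : Set ℝ :=
  {r | ∃ γ, Pstar P γ f ≠ 0 ∧ ‖Pstar P γ f‖ = r}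

/-- `pfun P f k` is the `k`-th largest element of `ranSet P f` (for `k ≥ 1`),
with value `0` if fewer than `k` values exist (`sSup ∅ = 0` in `ℝ`). -/
def pfun (P : Γ → X →L[ℝ] X) (f : StrongDual ℝ X) : ℕ → ℝ
  | 0 => 0
  | 1 => sSup (ranSet P f)
  | (k + 2) => sSup {r | r ∈ ranSet P f ∧ r < pfun P f (k + 1)}

/-- `qfun P f k = p_k(f) - p_{k+1}(f)`. -/
def qfun (P : Γ → X →L[ℝ] X) (f : StrongDual ℝ X) (k : ℕ) : ℝ :=
  pfun P f k - pfun P f (k + 1)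

/-- `Gset P f k = {γ ∈ supp f : ‖P γ* f‖ ≥ p_k(f)}`. -/
def Gset (P : Γ → X →L[ℝ] X) (f : StrongDual ℝ X) (k : ℕ) : Set Γ :=
  {γ | Pstar P γ f ≠ 0 ∧ pfun P f k ≤ ‖Pstar P γ f‖}

/-- `rho P A`: the supremum, over finite subsets `S ⊆ A` and functionals `f` whose
components on `S` have norm at most `1`, of `‖∑_{γ ∈ S} P γ* f‖` (valued in `ℝ≥0∞`).
For a finite set `A` this agrees with the quantity `ρ(A)` of the paper, since `ρ`
is increasing with respect to inclusion. -/
def rho (P : Γ → X →L[ℝ] X) (A : Set Γ) : ℝ≥0∞ :=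
  ⨆ (S : Finset Γ) (_ : ↑S ⊆ A) (f : StrongDual ℝ X)
    (_ : ∀ γ ∈ S, ‖Pstar P γ f‖ ≤ 1), ENNReal.ofReal ‖∑ γ ∈ S, Pstar P γ f‖

/-- `theta P f = ∑_{k=1}^∞ q_k(f) ρ(G_k(f))`, valued in `ℝ≥0∞`. -/
def theta (P : Γ → X →L[ℝ] X) (f : StrongDual ℝ X) : ℝ≥0∞ :=
  ∑' k : ℕ, ENNReal.ofReal (qfun P f (k + 1)) * rho P (Gset P f (k + 1))

end

section DecreasingEnumeration

open Filter Topology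

/-- `pfun` for an arbitrary set of reals: entry `k + 1` is the `(k + 1)`-st largest element,
and `0` once the elements run out. -/
noncomputable def decEnum (S : Set ℝ) : ℕ → ℝ
  | 0 => 0
  | 1 => sSup S
  | (k + 2) => sSup {r | r ∈ S ∧ r < decEnum S (k + 1)}

theorem sSup_mem_of_finite_ge {T : Set ℝ} (hT : ∀ ε > 0, {r ∈ T | ε ≤ r}.Finite)
    (h : 0 < sSup T) : sSup T ∈ T := by
  have hne : T.Nonempty := by
    by_contra hT'
    rw [Set.not_nonempty_iff_eq_empty.1 hT', Real.sSup_empty] at h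
    exact h.false
  obtain ⟨r₀, hr₀, hlt⟩ := exists_lt_of_lt_csSup hne (half_lt_self h)
  obtain ⟨M, ⟨hMT, hM⟩, hmax⟩ :=
    Set.exists_max_image _ id (hT _ (half_pos h)) ⟨r₀, hr₀, hlt.le⟩
  have hgreatest : IsGreatest T M := by
    refine ⟨hMT, fun r hr => ?_⟩
    rcases le_or_gt (sSup T / 2) r with hr' | hr'
    · exact hmax r ⟨hr, hr'⟩
    · exact hr'.le.trans hM
  rwa [hgreatest.csSup_eq]

variable {S : Set ℝ}

theorem bddAbove_of_finite_ge (hfin : ∀ ε > 0, {r ∈ S | ε ≤ r}.Finite) : BddAbove S :=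
  ((hfin 1 one_pos).bddAbove.union bddAbove_Iio).mono fun r hr =>
    (le_or_gt 1 r).imp (fun h => ⟨hr, h⟩) id

theorem decEnum_nonneg (hS : ∀ r ∈ S, 0 < r) : ∀ k, 0 ≤ decEnum S k
  | 0 => le_rfl
  | 1 => Real.sSup_nonneg fun r hr => (hS r hr).le
  | _ + 2 => Real.sSup_nonneg fun r hr => (hS r hr.1).le

theorem antitone_decEnum_succ (hS : ∀ r ∈ S, 0 < r) : Antitone fun k => decEnum S (k + 1) :=
  antitone_nat_of_succ_le fun k =>
    Real.sSup_le (fun _ hr => hr.2.le) (decEnum_nonneg hS (k + 1))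

theorem decEnum_succ_mem (hfin : ∀ ε > 0, {r ∈ S | ε ≤ r}.Finite) :
    ∀ {k}, 0 < decEnum S (k + 1) → decEnum S (k + 1) ∈ S
  | 0, h => sSup_mem_of_finite_ge hfin h
  | _ + 1, h =>
    (sSup_mem_of_finite_ge (fun ε hε => (hfin ε hε).subset fun _ hr => ⟨hr.1.1, hr.2⟩) h).1

theorem decEnum_succ_succ_lt (hfin : ∀ ε > 0, {r ∈ S | ε ≤ r}.Finite) {k : ℕ}
    (h : 0 < decEnum S (k + 2)) : decEnum S (k + 2) < decEnum S (k + 1) :=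
  (sSup_mem_of_finite_ge (fun ε hε => (hfin ε hε).subset fun _ hr => ⟨hr.1.1, hr.2⟩) h).2

theorem decEnum_succ_le_iff (hS : ∀ r ∈ S, 0 < r) (hfin : ∀ ε > 0, {r ∈ S | ε ≤ r}.Finite)
    {j k : ℕ} (hj : 0 < decEnum S (j + 1)) :
    decEnum S (k + 1) ≤ decEnum S (j + 1) ↔ j ≤ k := by
  refine ⟨fun h => ?_, fun h => antitone_decEnum_succ hS h⟩
  by_contra! hkj
  obtain ⟨i, rfl⟩ := Nat.exists_eq_add_of_lt hkj
  have hlt : decEnum S (k + i + 1 + 1) < decEnum S (k + i + 1) := decEnum_succ_succ_lt hfin hj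
  linarith [antitone_decEnum_succ hS (Nat.le_add_right k i)]

theorem exists_decEnum_succ_lt (hfin : ∀ ε > 0, {r ∈ S | ε ≤ r}.Finite) {ε : ℝ}
    (hε : 0 < ε) : ∃ k, decEnum S (k + 1) < ε := by
  by_contra! h
  have hanti : StrictAnti fun k => decEnum S (k + 1) :=
    strictAnti_nat_of_succ_lt fun k => decEnum_succ_succ_lt hfin (hε.trans_le (h (k + 1)))
  exact Set.infinite_of_injective_forall_mem (s := {r ∈ S | ε ≤ r}) hanti.injective
    (fun k => ⟨decEnum_succ_mem hfin (hε.trans_le (h k)), h k⟩) (hfin ε hε)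

theorem tendsto_decEnum_succ (hS : ∀ r ∈ S, 0 < r) (hfin : ∀ ε > 0, {r ∈ S | ε ≤ r}.Finite) :
    Tendsto (fun k => decEnum S (k + 1)) atTop (𝓝 0) := by
  refine tendsto_order.2 ⟨fun a ha => Eventually.of_forall fun k =>
    ha.trans_le (decEnum_nonneg hS _), fun ε hε => ?_⟩
  obtain ⟨k, hk⟩ := exists_decEnum_succ_lt hfin hε
  exact eventually_atTop.2 ⟨k, fun n hn => (antitone_decEnum_succ hS hn).trans_lt hk⟩

theorem exists_eq_decEnum_succ (hS : ∀ r ∈ S, 0 < r) (hfin : ∀ ε > 0, {r ∈ S | ε ≤ r}.Finite)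
    {r : ℝ} (hr : r ∈ S) : ∃ j, r = decEnum S (j + 1) := by
  classical
  have hex := exists_decEnum_succ_lt hfin (hS r hr)
  -- the last entry not below `r` must be `r` itself: anything strictly between is in `S`
  have hfirst : r ≤ decEnum S (0 + 1) := le_csSup (bddAbove_of_finite_ge hfin) hr
  obtain ⟨j, hj⟩ : ∃ j, Nat.find hex = j + 1 := Nat.exists_eq_add_one.2 <| Nat.pos_of_ne_zero
    fun h0 => (Nat.find_spec hex).not_ge (h0 ▸ hfirst)
  have hlt : decEnum S (j + 2) < r := by simpa [hj] using Nat.find_spec hex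
  have hle : r ≤ decEnum S (j + 1) := not_lt.1 (Nat.find_min hex (by omega))
  refine ⟨j, le_antisymm hle (not_lt.1 fun h => hlt.not_ge ?_)⟩
  exact le_csSup ((bddAbove_of_finite_ge hfin).mono fun _ hs => hs.1) ⟨hr, h⟩

theorem decEnum_setOf_le_decEnum (hS : ∀ r ∈ S, 0 < r)
    (hfin : ∀ ε > 0, {r ∈ S | ε ≤ r}.Finite) (m : ℕ) :
    ∀ k, decEnum {r ∈ S | r ≤ decEnum S (m + 1)} (k + 1) = decEnum S (m + k + 1)
  | 0 => by
    show sSup _ = _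
    rcases (decEnum_nonneg hS (m + 1)).eq_or_lt with h0 | hpos
    · rw [← h0, show {r ∈ S | r ≤ 0} = ∅ from
        Set.eq_empty_of_forall_notMem fun r hr => (hS r hr.1).not_ge hr.2, Real.sSup_empty]
    · exact IsGreatest.csSup_eq ⟨⟨decEnum_succ_mem hfin hpos, le_rfl⟩, fun _ hr => hr.2⟩
  | k + 1 => by
    show sSup _ = sSup _
    rw [decEnum_setOf_le_decEnum hS hfin m k]
    congr 1
    ext r
    refine ⟨fun h => ⟨h.1.1, h.2⟩, fun h => ⟨⟨h.1, h.2.le.trans ?_⟩, h.2⟩⟩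
    exact antitone_decEnum_succ hS (Nat.le_add_right m k)

end DecreasingEnumeration

theorem hasSum_of_hasSum_nat_add {M : Type*} [AddCommMonoid M] [TopologicalSpace M]
    {F : ℕ → M} {a : M} (N : ℕ) (hF : ∀ n < N, F n = 0)
    (h : HasSum (fun n => F (n + N)) a) : HasSum F a :=
  ((add_left_injective N).hasSum_iff fun n hn =>
    hF n (not_le.1 fun hle => hn ⟨n - N, Nat.sub_add_cancel hle⟩)).1 h

/-- The weights are `q n * ρ n / T`, or a point mass at `N` when `T = 0`. -/
theorem exists_convex_hasSum_smul {E : Type*} [AddCommGroup E] [Module ℝ E]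
    [TopologicalSpace E] [T2Space E] {q ρ : ℕ → ℝ} {ω v : ℕ → E} {x : E} {T : ℝ} (N : ℕ)
    (hq : ∀ n, 0 ≤ q (n + N)) (hρ : ∀ n, 0 < q (n + N) → 0 < ρ (n + N))
    (hT : HasSum (fun n => q (n + N) * ρ (n + N)) T)
    (hx : HasSum (fun n => q (n + N) • ω (n + N)) x)
    (hv : ∀ n, 0 < q (n + N) → v (n + N) = (T / ρ (n + N)) • ω (n + N))
    (hv₀ : T = 0 → v N = 0) :
    ∃ lam : ℕ → ℝ, (∀ n, 0 ≤ lam n) ∧ (∀ n < N, lam n = 0) ∧ HasSum lam 1 ∧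
      HasSum (fun n => lam n • v n) x := by
  classical
  have hqρ : ∀ n, 0 ≤ q (n + N) * ρ (n + N) := fun n =>
    (hq n).eq_or_lt.elim (fun h => by simp [← h]) fun h => (mul_pos h (hρ n h)).le
  rcases (hT.nonneg hqρ).eq_or_lt with hT0 | hTpos
  · -- all weights vanish, so `x = 0 = v N`
    have hq0 : ∀ n, q (n + N) = 0 := fun n => by
      have := congrFun ((hasSum_zero_iff_of_nonneg hqρ).1 (hT0 ▸ hT)) n
      exact (hq n).eq_or_lt.elim Eq.symm fun h => absurd this (mul_pos h (hρ n h)).ne'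
    have hx0 : x = 0 := hx.unique (by simp [hq0])
    refine ⟨fun n => if n = N then 1 else 0, fun n => by positivity, fun n hn => if_neg hn.ne,
      hasSum_ite_eq N 1, ?_⟩
    rw [hx0]
    exact hasSum_zero.congr_fun fun n => by by_cases h : n = N <;> simp [h, hv₀ hT0.symm]
  refine ⟨fun n => if N ≤ n then q n * ρ n / T else 0, fun n => ?_, fun n hn => if_neg (by omega),
    hasSum_of_hasSum_nat_add N (fun n hn => if_neg (by omega)) ?_,
    hasSum_of_hasSum_nat_add N (fun n hn => by simp [show ¬N ≤ n by omega]) ?_⟩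
  · dsimp only
    split_ifs with hn
    · obtain ⟨k, rfl⟩ := Nat.exists_eq_add_of_le' hn
      exact div_nonneg (hqρ k) hTpos.le
    · exact le_rfl
  · simpa [hTpos.ne'] using hT.div_const T
  · refine hx.congr_fun fun n => ?_
    dsimp only
    rw [if_pos (Nat.le_add_left N n)]
    rcases (hq n).eq_or_lt with h0 | hpos
    · simp [← h0]
    · rw [hv n hpos, smul_smul]
      congr 1
      field_simp [(hρ n hpos).ne', hTpos.ne']

theorem sum_range_ite_le_sub_eq {M : Type*} [AddCommGroup M] (a : ℕ → M) (j m : ℕ) :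
    ∑ k ∈ Finset.range m, (if j ≤ k then a k - a (k + 1) else 0) = a j - a (max j m) := by
  induction m with
  | zero => simp
  | succ m ih =>
    rw [Finset.sum_range_succ, ih]
    split_ifs with h
    · rw [max_eq_right h, max_eq_right (by omega)]
      abel
    · rw [max_eq_left (by omega), max_eq_left (by omega), add_zero]

section Components

open Filter Topology
open scoped ENNReal

variable {X : Type*} [NormedAddCommGroup X] [NormedSpace ℝ X] {Γ : Type*}
  {P : Γ → X →L[ℝ] X}

variable (P) in
noncomputable def pstarL (γ : Γ) : StrongDual ℝ X →L[ℝ] StrongDual ℝ X :=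
  (ContinuousLinearMap.compL ℝ X X ℝ).flip (P γ)

theorem Pstar_add (γ : Γ) (a b : StrongDual ℝ X) :
    Pstar P γ (a + b) = Pstar P γ a + Pstar P γ b :=
  map_add (pstarL P γ) a b

theorem Pstar_sub (γ : Γ) (a b : StrongDual ℝ X) :
    Pstar P γ (a - b) = Pstar P γ a - Pstar P γ b :=
  map_sub (pstarL P γ) a b

theorem Pstar_smul (γ : Γ) (c : ℝ) (a : StrongDual ℝ X) :
    Pstar P γ (c • a) = c • Pstar P γ a :=
  map_smul (pstarL P γ) c a

theorem Pstar_sum {ι : Type*} (γ : Γ) (s : Finset ι) (a : ι → StrongDual ℝ X) :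
    Pstar P γ (∑ i ∈ s, a i) = ∑ i ∈ s, Pstar P γ (a i) :=
  map_sum (pstarL P γ) a s

theorem Pstar_Pstar_self (hproj : ∀ γ, (P γ).comp (P γ) = P γ) (g : StrongDual ℝ X) (γ : Γ) :
    Pstar P γ (Pstar P γ g) = Pstar P γ g := by
  rw [Pstar, Pstar, ContinuousLinearMap.comp_assoc, hproj]

theorem Pstar_Pstar_of_ne (hdisj : ∀ α β, α ≠ β → (P α).comp (P β) = 0) (g : StrongDual ℝ X)
    {α γ : Γ} (h : α ≠ γ) : Pstar P γ (Pstar P α g) = 0 := by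
  rw [Pstar, Pstar, ContinuousLinearMap.comp_assoc, hdisj α γ h, ContinuousLinearMap.comp_zero]

theorem Pstar_sum_smul_Pstar [DecidableEq Γ] (hproj : ∀ γ, (P γ).comp (P γ) = P γ)
    (hdisj : ∀ α β, α ≠ β → (P α).comp (P β) = 0) (g : StrongDual ℝ X) (s : Finset Γ)
    (c : Γ → ℝ) (γ : Γ) :
    Pstar P γ (∑ α ∈ s, c α • Pstar P α g) = if γ ∈ s then c γ • Pstar P γ g else 0 := by
  simp only [Pstar_sum, Pstar_smul]
  split_ifs with hγ
  · rw [Finset.sum_eq_single_of_mem γ hγ fun α _ hα => by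
      rw [Pstar_Pstar_of_ne hdisj g hα, smul_zero], Pstar_Pstar_self hproj]
  · exact Finset.sum_eq_zero fun α hα => by
      rw [Pstar_Pstar_of_ne hdisj g (ne_of_mem_of_not_mem hα hγ), smul_zero]

theorem ext_Pstar (hspanX : (Submodule.span ℝ (⋃ γ, Set.range (P γ))).topologicalClosure = ⊤)
    {a b : StrongDual ℝ X} (h : ∀ γ, Pstar P γ a = Pstar P γ b) : a = b := by
  refine ContinuousLinearMap.ext_on (Submodule.dense_iff_topologicalClosure_eq_top.2 hspanX) ?_
  rintro _ ⟨_, ⟨γ, rfl⟩, x, rfl⟩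
  exact DFunLike.congr_fun (h γ) x

theorem finite_setOf_le_norm_Pstar
    (hdisj : ∀ α β, α ≠ β → (P α).comp (P β) = 0) (hbdd : ∃ C : ℝ, ∀ γ, ‖P γ‖ ≤ C)
    (hspan_dual : (Submodule.span ℝ
      (⋃ γ, Set.range (fun f : StrongDual ℝ X => f.comp (P γ)))).topologicalClosure = ⊤)
    (g : StrongDual ℝ X) {ε : ℝ} (hε : 0 < ε) : {γ | ε ≤ ‖Pstar P γ g‖}.Finite := by
  obtain ⟨C, hC⟩ := hbdd
  have hsupp : ∀ y ∈ Submodule.span ℝ (⋃ γ, Set.range fun f : StrongDual ℝ X => f.comp (P γ)),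
      {γ | Pstar P γ y ≠ 0}.Finite := by
    intro y hy
    induction hy using Submodule.span_induction with
    | mem y hy =>
      obtain ⟨α, g, rfl⟩ := Set.mem_iUnion.1 hy
      refine (Set.finite_singleton α).subset fun γ hγ => ?_
      by_contra hne
      exact hγ (Pstar_Pstar_of_ne hdisj g (Ne.symm hne))
    | zero => simp [Pstar]
    | add y z _ _ hy hz =>
      refine (hy.union hz).subset fun γ hγ => ?_
      by_contra h
      simp only [Set.mem_union, Set.mem_ofPred_eq, not_or, not_not] at h
      exact hγ (by rw [Pstar_add, h.1, h.2, add_zero])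
    | smul c y _ hy =>
      refine hy.subset fun γ hγ h => hγ ?_
      rw [Pstar_smul, h, smul_zero]
  have hg : g ∈ closure (Submodule.span ℝ
      (⋃ γ, Set.range fun f : StrongDual ℝ X => f.comp (P γ)) : Set (StrongDual ℝ X)) := by
    rw [← Submodule.topologicalClosure_coe, hspan_dual]
    trivial
  have hC' : 0 < |C| + 1 := by positivity
  obtain ⟨y, hy, hdist⟩ := Metric.mem_closure_iff.1 hg (ε / (|C| + 1)) (by positivity)
  refine (hsupp y hy).subset fun γ hγ hy0 => (show ε ≤ _ from hγ).not_gt ?_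
  -- components of `g - y` are small uniformly in `γ`, and `y` has finitely many
  calc ‖Pstar P γ g‖ = ‖Pstar P γ (g - y)‖ := by rw [Pstar_sub, hy0, sub_zero]
    _ ≤ ‖g - y‖ * ‖P γ‖ := ContinuousLinearMap.opNorm_comp_le _ _
    _ ≤ ‖g - y‖ * (|C| + 1) := by gcongr; linarith [hC γ, le_abs_self C]
    _ < ε := by rwa [← dist_eq_norm, ← lt_div_iff₀ hC']

theorem norm_inv_norm_smul {E : Type*} [NormedAddCommGroup E] [NormedSpace ℝ E] {x : E}
    (hx : x ≠ 0) : ‖‖x‖⁻¹ • x‖ = 1 :=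
  norm_smul_inv_norm hx

theorem pos_of_mem_ranSet {g : StrongDual ℝ X} {r : ℝ} (hr : r ∈ ranSet P g) : 0 < r := by
  obtain ⟨γ, hγ, rfl⟩ := hr
  exact norm_pos_iff.2 hγ

theorem finite_ranSet_ge (hdisj : ∀ α β, α ≠ β → (P α).comp (P β) = 0)
    (hbdd : ∃ C : ℝ, ∀ γ, ‖P γ‖ ≤ C)
    (hspan_dual : (Submodule.span ℝ
      (⋃ γ, Set.range (fun f : StrongDual ℝ X => f.comp (P γ)))).topologicalClosure = ⊤)
    (g : StrongDual ℝ X) : ∀ ε > 0, {r ∈ ranSet P g | ε ≤ r}.Finite := fun _ hε =>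
  ((finite_setOf_le_norm_Pstar hdisj hbdd hspan_dual g hε).image _).subset <| by
    rintro _ ⟨⟨γ, -, rfl⟩, h⟩
    exact ⟨γ, h, rfl⟩

variable (P) in
theorem pfun_eq_decEnum (g : StrongDual ℝ X) : ∀ k, pfun P g k = decEnum (ranSet P g) k
  | 0 => rfl
  | 1 => rfl
  | k + 2 => by rw [pfun, decEnum, pfun_eq_decEnum g (k + 1)]

variable (P) in
theorem pfun_nonneg (g : StrongDual ℝ X) (k : ℕ) : 0 ≤ pfun P g k :=
  pfun_eq_decEnum P g k ▸ decEnum_nonneg (fun _ => pos_of_mem_ranSet) k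

variable (P) in
theorem antitone_pfun_succ (g : StrongDual ℝ X) : Antitone fun k => pfun P g (k + 1) := by
  simpa only [pfun_eq_decEnum] using antitone_decEnum_succ fun _ => pos_of_mem_ranSet (g := g)

variable (P) in
theorem qfun_succ_nonneg (g : StrongDual ℝ X) (k : ℕ) : 0 ≤ qfun P g (k + 1) :=
  sub_nonneg.2 (antitone_pfun_succ P g k.le_succ)

theorem pfun_pos_of_qfun_pos {g : StrongDual ℝ X} {k : ℕ} (h : 0 < qfun P g k) :
    0 < pfun P g k := by
  unfold qfun at h
  linarith [pfun_nonneg P g (k + 1)]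

theorem le_rho {A : Set Γ} {S : Finset Γ} (hS : ↑S ⊆ A) {g : StrongDual ℝ X}
    (hg : ∀ γ ∈ S, ‖Pstar P γ g‖ ≤ 1) : ENNReal.ofReal ‖∑ γ ∈ S, Pstar P γ g‖ ≤ rho P A :=
  le_iSup₂_of_le S hS <| le_iSup₂_of_le g hg le_rfl

theorem one_le_rho {A : Set Γ} {γ : Γ} (hγA : γ ∈ A) {g : StrongDual ℝ X}
    (hγ : Pstar P γ g ≠ 0) : 1 ≤ rho P A := by
  have hunit := Pstar_smul (P := P) γ ‖Pstar P γ g‖⁻¹ g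
  have := le_rho (P := P) (S := {γ}) (by simpa using hγA) (g := ‖Pstar P γ g‖⁻¹ • g) (by
    simp [hunit, norm_inv_norm_smul hγ])
  simpa [hunit, norm_inv_norm_smul hγ] using this

section Approximants

variable {f : StrongDual ℝ X} {hGfin : ∀ k : ℕ, (Gset P f (k + 1)).Finite}
  {omega : ℕ → StrongDual ℝ X}

variable (P f omega) in
/-- The functional `h_m(f)` of the paper. -/
noncomputable def headSum (m : ℕ) : StrongDual ℝ X :=
  ∑ k ∈ Finset.range m, qfun P f (k + 1) • omega (k + 1)

theorem Pstar_omega (hproj : ∀ γ, (P γ).comp (P γ) = P γ)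
    (hdisj : ∀ α β, α ≠ β → (P α).comp (P β) = 0)
    (homega : ∀ k : ℕ,
      omega (k + 1) = ∑ γ ∈ (hGfin k).toFinset, ‖Pstar P γ f‖⁻¹ • Pstar P γ f) (k : ℕ) (γ : Γ) :
    Pstar P γ (omega (k + 1)) =
      (Gset P f (k + 1)).indicator (fun γ => ‖Pstar P γ f‖⁻¹ • Pstar P γ f) γ := by
  classical
  rw [homega, Pstar_sum_smul_Pstar hproj hdisj, Set.indicator_apply]
  simp only [Set.Finite.mem_toFinset]

theorem ofReal_norm_omega_le_rho (hproj : ∀ γ, (P γ).comp (P γ) = P γ)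
    (hdisj : ∀ α β, α ≠ β → (P α).comp (P β) = 0)
    (homega : ∀ k : ℕ,
      omega (k + 1) = ∑ γ ∈ (hGfin k).toFinset, ‖Pstar P γ f‖⁻¹ • Pstar P γ f) (k : ℕ) :
    ENNReal.ofReal ‖omega (k + 1)‖ ≤ rho P (Gset P f (k + 1)) := by
  have hcomp : ∀ γ ∈ (hGfin k).toFinset,
      Pstar P γ (omega (k + 1)) = ‖Pstar P γ f‖⁻¹ • Pstar P γ f := fun γ hγ => by
    rw [Pstar_omega hproj hdisj homega, Set.indicator_of_mem ((hGfin k).mem_toFinset.1 hγ)]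
  have := le_rho (hGfin k).coe_toFinset.subset (g := omega (k + 1)) fun γ hγ => by
    rw [hcomp γ hγ, norm_inv_norm_smul ((hGfin k).mem_toFinset.1 hγ).1]
  rwa [Finset.sum_congr rfl hcomp, ← homega] at this

theorem norm_qfun_smul_omega_le (hproj : ∀ γ, (P γ).comp (P γ) = P γ)
    (hdisj : ∀ α β, α ≠ β → (P α).comp (P β) = 0)
    (homega : ∀ k : ℕ,
      omega (k + 1) = ∑ γ ∈ (hGfin k).toFinset, ‖Pstar P γ f‖⁻¹ • Pstar P γ f) {k : ℕ}
    (hk : ENNReal.ofReal (qfun P f (k + 1)) * rho P (Gset P f (k + 1)) ≠ ⊤) :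
    ‖qfun P f (k + 1) • omega (k + 1)‖ ≤
      (ENNReal.ofReal (qfun P f (k + 1)) * rho P (Gset P f (k + 1))).toReal := by
  have hq := qfun_succ_nonneg P f k
  rw [norm_smul, Real.norm_of_nonneg hq,
    ← ENNReal.toReal_ofReal (mul_nonneg hq (norm_nonneg (omega (k + 1)))), ENNReal.ofReal_mul hq]
  exact ENNReal.toReal_mono hk (by gcongr; exact ofReal_norm_omega_le_rho hproj hdisj homega k)

theorem pfun_succ_mem_ranSet (hfin : ∀ ε > 0, {r ∈ ranSet P f | ε ≤ r}.Finite) {k : ℕ}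
    (h : 0 < pfun P f (k + 1)) : pfun P f (k + 1) ∈ ranSet P f := by
  rw [pfun_eq_decEnum] at h ⊢
  exact decEnum_succ_mem hfin h

theorem tendsto_pfun_succ (hfin : ∀ ε > 0, {r ∈ ranSet P f | ε ≤ r}.Finite) :
    Tendsto (fun k => pfun P f (k + 1)) atTop (𝓝 0) := by
  simpa only [pfun_eq_decEnum] using tendsto_decEnum_succ (fun _ => pos_of_mem_ranSet) hfin

theorem toReal_rho_Gset_pos (hfin : ∀ ε > 0, {r ∈ ranSet P f | ε ≤ r}.Finite)
    (htheta : theta P f ≠ ⊤) {k : ℕ} (hq : 0 < qfun P f (k + 1)) :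
    0 < (rho P (Gset P f (k + 1))).toReal := by
  obtain ⟨γ, hγ, hnorm⟩ := pfun_succ_mem_ranSet hfin (pfun_pos_of_qfun_pos hq)
  have hγG : γ ∈ Gset P f (k + 1) := ⟨hγ, hnorm.ge⟩
  refine ENNReal.toReal_pos ((one_le_rho hγG hγ).trans_lt' one_pos).ne' fun htop => ?_
  apply ENNReal.ne_top_of_tsum_ne_top htheta k
  rw [htop, ENNReal.mul_top (ENNReal.ofReal_pos.2 hq).ne']

theorem exists_norm_Pstar_eq_pfun (hfin : ∀ ε > 0, {r ∈ ranSet P f | ε ≤ r}.Finite) {γ : Γ}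
    (hγ : Pstar P γ f ≠ 0) : ∃ j, ‖Pstar P γ f‖ = pfun P f (j + 1) := by
  simpa only [pfun_eq_decEnum] using
    exists_eq_decEnum_succ (fun _ => pos_of_mem_ranSet) hfin ⟨γ, hγ, rfl⟩

theorem mem_Gset_succ_iff (hfin : ∀ ε > 0, {r ∈ ranSet P f | ε ≤ r}.Finite) {γ : Γ} {j : ℕ}
    (hγ : Pstar P γ f ≠ 0) (hj : ‖Pstar P γ f‖ = pfun P f (j + 1)) (k : ℕ) :
    γ ∈ Gset P f (k + 1) ↔ j ≤ k := by
  have hpos : 0 < decEnum (ranSet P f) (j + 1) := by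
    rw [← pfun_eq_decEnum, ← hj]
    exact norm_pos_iff.2 hγ
  rw [Gset, Set.mem_ofPred_eq, hj, pfun_eq_decEnum, pfun_eq_decEnum, and_iff_right hγ]
  exact decEnum_succ_le_iff (fun _ => pos_of_mem_ranSet) hfin hpos

theorem Pstar_sub_headSum (hproj : ∀ γ, (P γ).comp (P γ) = P γ)
    (hdisj : ∀ α β, α ≠ β → (P α).comp (P β) = 0)
    (hfin : ∀ ε > 0, {r ∈ ranSet P f | ε ≤ r}.Finite)
    (homega : ∀ k : ℕ,
      omega (k + 1) = ∑ γ ∈ (hGfin k).toFinset, ‖Pstar P γ f‖⁻¹ • Pstar P γ f) (m : ℕ) (γ : Γ) :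
    Pstar P γ (f - headSum P f omega m) =
      min (pfun P f (m + 1)) ‖Pstar P γ f‖ • (‖Pstar P γ f‖⁻¹ • Pstar P γ f) := by
  classical
  simp only [Pstar_sub, headSum, Pstar_sum, Pstar_smul, Pstar_omega hproj hdisj homega]
  rcases eq_or_ne (Pstar P γ f) 0 with h0 | hγ
  · simp [Set.indicator_of_notMem fun hk : γ ∈ Gset P f _ => hk.1 h0, h0]
  obtain ⟨j, hj⟩ := exists_norm_Pstar_eq_pfun hfin hγ
  set u := ‖Pstar P γ f‖⁻¹ • Pstar P γ f with hu
  have hterm : ∀ k, qfun P f (k + 1) • (Gset P f (k + 1)).indicator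
      (fun γ => ‖Pstar P γ f‖⁻¹ • Pstar P γ f) γ =
        (if j ≤ k then pfun P f (k + 1) - pfun P f (k + 1 + 1) else 0) • u := fun k => by
    rw [Set.indicator_apply]
    simp only [mem_Gset_succ_iff hfin hγ hj]
    split_ifs <;> simp [qfun, hu]
  have hf : Pstar P γ f = pfun P f (j + 1) • u := by
    rw [hu, ← hj, smul_inv_smul₀ (norm_ne_zero_iff.2 hγ)]
  rw [Finset.sum_congr rfl fun k _ => hterm k, ← Finset.sum_smul,
    sum_range_ite_le_sub_eq (fun k => pfun P f (k + 1)), hj, hf,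
    (antitone_pfun_succ P f).map_max, min_comm]
  module

theorem norm_Pstar_sub_headSum (hproj : ∀ γ, (P γ).comp (P γ) = P γ)
    (hdisj : ∀ α β, α ≠ β → (P α).comp (P β) = 0)
    (hfin : ∀ ε > 0, {r ∈ ranSet P f | ε ≤ r}.Finite)
    (homega : ∀ k : ℕ,
      omega (k + 1) = ∑ γ ∈ (hGfin k).toFinset, ‖Pstar P γ f‖⁻¹ • Pstar P γ f) (m : ℕ) (γ : Γ) :
    ‖Pstar P γ (f - headSum P f omega m)‖ = min (pfun P f (m + 1)) ‖Pstar P γ f‖ := by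
  rw [Pstar_sub_headSum hproj hdisj hfin homega, norm_smul,
    Real.norm_of_nonneg (le_min (pfun_nonneg P f _) (norm_nonneg _))]
  rcases eq_or_ne (Pstar P γ f) 0 with h0 | hγ
  · simp [h0, pfun_nonneg]
  · rw [norm_inv_norm_smul hγ, mul_one]

theorem ranSet_sub_headSum (hproj : ∀ γ, (P γ).comp (P γ) = P γ)
    (hdisj : ∀ α β, α ≠ β → (P α).comp (P β) = 0)
    (hfin : ∀ ε > 0, {r ∈ ranSet P f | ε ≤ r}.Finite)
    (homega : ∀ k : ℕ,
      omega (k + 1) = ∑ γ ∈ (hGfin k).toFinset, ‖Pstar P γ f‖⁻¹ • Pstar P γ f) (m : ℕ) :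
    ranSet P (f - headSum P f omega m) = {r ∈ ranSet P f | r ≤ pfun P f (m + 1)} := by
  ext r
  constructor
  · rintro ⟨γ, hγ, rfl⟩
    rw [← norm_ne_zero_iff, norm_Pstar_sub_headSum hproj hdisj hfin homega] at hγ
    rw [norm_Pstar_sub_headSum hproj hdisj hfin homega]
    rcases min_cases (pfun P f (m + 1)) ‖Pstar P γ f‖ with ⟨hmin, -⟩ | ⟨hmin, hlt⟩
    · rw [hmin] at hγ ⊢
      exact ⟨pfun_succ_mem_ranSet hfin ((pfun_nonneg P f _).lt_of_ne' hγ), le_rfl⟩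
    · rw [hmin] at hγ ⊢
      exact ⟨⟨γ, norm_ne_zero_iff.1 hγ, rfl⟩, hlt.le⟩
  · rintro ⟨⟨γ, hγ, rfl⟩, hle⟩
    have hnorm : ‖Pstar P γ (f - headSum P f omega m)‖ = ‖Pstar P γ f‖ := by
      rw [norm_Pstar_sub_headSum hproj hdisj hfin homega, min_eq_right hle]
    exact ⟨γ, norm_ne_zero_iff.1 (hnorm ▸ norm_ne_zero_iff.2 hγ), hnorm⟩

theorem pfun_sub_headSum (hproj : ∀ γ, (P γ).comp (P γ) = P γ)
    (hdisj : ∀ α β, α ≠ β → (P α).comp (P β) = 0)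
    (hfin : ∀ ε > 0, {r ∈ ranSet P f | ε ≤ r}.Finite)
    (homega : ∀ k : ℕ,
      omega (k + 1) = ∑ γ ∈ (hGfin k).toFinset, ‖Pstar P γ f‖⁻¹ • Pstar P γ f) (m k : ℕ) :
    pfun P (f - headSum P f omega m) (k + 1) = pfun P f (m + k + 1) := by
  simp only [pfun_eq_decEnum, ranSet_sub_headSum hproj hdisj hfin homega]
  exact decEnum_setOf_le_decEnum (fun _ => pos_of_mem_ranSet) hfin m k

theorem Gset_sub_headSum (hproj : ∀ γ, (P γ).comp (P γ) = P γ)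
    (hdisj : ∀ α β, α ≠ β → (P α).comp (P β) = 0)
    (hfin : ∀ ε > 0, {r ∈ ranSet P f | ε ≤ r}.Finite)
    (homega : ∀ k : ℕ,
      omega (k + 1) = ∑ γ ∈ (hGfin k).toFinset, ‖Pstar P γ f‖⁻¹ • Pstar P γ f) {m k : ℕ}
    (hpos : 0 < pfun P f (m + k + 1)) :
    Gset P (f - headSum P f omega m) (k + 1) = Gset P f (m + k + 1) := by
  have hle : pfun P f (m + k + 1) ≤ pfun P f (m + 1) := antitone_pfun_succ P f (by omega)
  ext γ
  show (_ ≠ 0 ∧ _ ≤ _) ↔ (_ ≠ 0 ∧ _ ≤ _)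
  rw [pfun_sub_headSum hproj hdisj hfin homega, ← norm_ne_zero_iff,
    norm_Pstar_sub_headSum hproj hdisj hfin homega, le_min_iff]
  -- the norm bound forces the component to be non-zero on both sides
  exact ⟨fun h => ⟨norm_ne_zero_iff.1 (hpos.trans_le h.2.2).ne', h.2.2⟩,
    fun h => ⟨(lt_min (hpos.trans_le hle) (hpos.trans_le h.2)).ne', hle, h.2⟩⟩

theorem theta_sub_headSum (hproj : ∀ γ, (P γ).comp (P γ) = P γ)
    (hdisj : ∀ α β, α ≠ β → (P α).comp (P β) = 0)
    (hfin : ∀ ε > 0, {r ∈ ranSet P f | ε ≤ r}.Finite)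
    (homega : ∀ k : ℕ,
      omega (k + 1) = ∑ γ ∈ (hGfin k).toFinset, ‖Pstar P γ f‖⁻¹ • Pstar P γ f) (m : ℕ) :
    theta P (f - headSum P f omega m) =
      ∑' k, ENNReal.ofReal (qfun P f (m + k + 1)) * rho P (Gset P f (m + k + 1)) := by
  refine tsum_congr fun k => ?_
  have hq : qfun P (f - headSum P f omega m) (k + 1) = qfun P f (m + k + 1) := by
    rw [qfun, qfun, pfun_sub_headSum hproj hdisj hfin homega,
      pfun_sub_headSum hproj hdisj hfin homega]
    rfl
  rw [hq]
  rcases (pfun_nonneg P f (m + k + 1)).eq_or_lt with h0 | hpos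
  · have hq0 : qfun P f (m + k + 1) ≤ 0 := not_lt.1 fun h => (pfun_pos_of_qfun_pos h).ne' h0.symm
    rw [ENNReal.ofReal_of_nonpos hq0, zero_mul, zero_mul]
  · rw [Gset_sub_headSum hproj hdisj hfin homega hpos]

theorem hasSum_toReal_theta_sub_headSum (hproj : ∀ γ, (P γ).comp (P γ) = P γ)
    (hdisj : ∀ α β, α ≠ β → (P α).comp (P β) = 0)
    (hfin : ∀ ε > 0, {r ∈ ranSet P f | ε ≤ r}.Finite) (htheta : theta P f ≠ ⊤)
    (homega : ∀ k : ℕ,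
      omega (k + 1) = ∑ γ ∈ (hGfin k).toFinset, ‖Pstar P γ f‖⁻¹ • Pstar P γ f) (m : ℕ) :
    HasSum (fun k => qfun P f (k + (m + 1)) * (rho P (Gset P f (k + (m + 1)))).toReal)
      (theta P (f - headSum P f omega m)).toReal := by
  set a : ℕ → ℝ≥0∞ := fun k => ENNReal.ofReal (qfun P f (k + 1)) * rho P (Gset P f (k + 1))
  have htail : ∑' k, a (m + k) ≠ ⊤ :=
    ne_top_of_le_ne_top htheta (ENNReal.tsum_comp_le_tsum_of_injective (add_right_injective m) a)
  rw [theta_sub_headSum hproj hdisj hfin homega,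
    ENNReal.tsum_toReal_eq fun k => ENNReal.ne_top_of_tsum_ne_top htheta (m + k)]
  convert ENNReal.hasSum_toReal htail using 2 with k
  rw [ENNReal.toReal_mul, ENNReal.toReal_ofReal (qfun_succ_nonneg P f _),
    show k + (m + 1) = m + k + 1 by omega]

theorem hasSum_qfun_smul_omega (hproj : ∀ γ, (P γ).comp (P γ) = P γ)
    (hdisj : ∀ α β, α ≠ β → (P α).comp (P β) = 0)
    (hspanX : (Submodule.span ℝ (⋃ γ, Set.range (P γ))).topologicalClosure = ⊤)
    (hfin : ∀ ε > 0, {r ∈ ranSet P f | ε ≤ r}.Finite) (htheta : theta P f ≠ ⊤)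
    (homega : ∀ k : ℕ,
      omega (k + 1) = ∑ γ ∈ (hGfin k).toFinset, ‖Pstar P γ f‖⁻¹ • Pstar P γ f) :
    HasSum (fun k => qfun P f (k + 1) • omega (k + 1)) f := by
  have hsum : Summable fun k => qfun P f (k + 1) • omega (k + 1) :=
    .of_norm_bounded (ENNReal.summable_toReal htheta) fun k =>
      norm_qfun_smul_omega_le hproj hdisj homega (ENNReal.ne_top_of_tsum_ne_top htheta k)
  refine hsum.hasSum_iff.2 (ext_Pstar hspanX fun γ => (sub_eq_zero.1 ?_).symm)
  rw [← Pstar_sub]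
  have hlim : Tendsto (fun m => Pstar P γ (f - headSum P f omega m)) atTop
      (𝓝 (Pstar P γ (f - ∑' k, qfun P f (k + 1) • omega (k + 1)))) :=
    ((pstarL P γ).continuous.tendsto _).comp
      (tendsto_const_nhds.sub hsum.hasSum.tendsto_sum_nat)
  refine tendsto_nhds_unique hlim (squeeze_zero_norm (fun m => ?_) (tendsto_pfun_succ hfin))
  rw [norm_Pstar_sub_headSum hproj hdisj hfin homega]
  exact min_le_left _ _

end Approximants

end Components

theorem convex_combination_of_approximants_general
    {X : Type*} [NormedAddCommGroup X] [NormedSpace ℝ X]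
    {Γ : Type*} (P : Γ → X →L[ℝ] X)
    (hproj : ∀ γ, (P γ).comp (P γ) = P γ)
    (hdisj : ∀ α β, α ≠ β → (P α).comp (P β) = 0)
    (hbdd : ∃ C : ℝ, ∀ γ, ‖P γ‖ ≤ C)
    (hspanX : (Submodule.span ℝ (⋃ γ, Set.range (P γ))).topologicalClosure = ⊤)
    (hspan_dual : (Submodule.span ℝ
        (⋃ γ, Set.range (fun f : StrongDual ℝ X => f.comp (P γ)))).topologicalClosure = ⊤)
    (f : StrongDual ℝ X)
    (htheta : theta P f ≠ ⊤)
    (hGfin : ∀ k : ℕ, (Gset P f (k + 1)).Finite)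
    (omega : ℕ → StrongDual ℝ X)
    (homega : ∀ k : ℕ,
      omega (k + 1) = ∑ γ ∈ (hGfin k).toFinset, ‖Pstar P γ f‖⁻¹ • Pstar P γ f)
    (h : ℕ → StrongDual ℝ X)
    (hh : ∀ m : ℕ, h m = ∑ k ∈ Finset.range m, qfun P f (k + 1) • omega (k + 1))
    (g : ℕ → ℕ → StrongDual ℝ X)
    (hg : ∀ m n : ℕ, m < n →
      g m n = if 0 < pfun P f n then
          ((theta P (f - h m)).toReal / (rho P (Gset P f n)).toReal) • omega n
        else 0)
    (j : ℕ → ℕ → StrongDual ℝ X)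
    (hj : ∀ m n : ℕ, m < n → j m n = h m + g m n)
    (m : ℕ) :
    ∃ lam : ℕ → ℝ, (∀ n, 0 ≤ lam n) ∧ (∀ n ≤ m, lam n = 0) ∧
      HasSum lam 1 ∧ HasSum (fun n : ℕ => lam n • j m n) f := by
  have hfin := finite_ranSet_ge hdisj hbdd hspan_dual f
  have hhead : h m = headSum P f omega m := hh m
  have hx : HasSum (fun n => qfun P f (n + (m + 1)) • omega (n + (m + 1))) (f - h m) := by
    rw [hhead]
    exact (hasSum_nat_add_iff' m).2 (hasSum_qfun_smul_omega hproj hdisj hspanX hfin htheta homega)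
  obtain ⟨lam, hlam_nonneg, hlam_zero, hlam_one, hlam_g⟩ :=
    exists_convex_hasSum_smul (q := qfun P f) (ρ := fun n => (rho P (Gset P f n)).toReal)
      (v := g m) (m + 1) (fun n => qfun_succ_nonneg P f (n + m))
      (fun n hq => toReal_rho_Gset_pos hfin htheta hq)
      (hhead ▸ hasSum_toReal_theta_sub_headSum hproj hdisj hfin htheta homega m) hx
      (fun n hq => by rw [hg m _ (by omega), if_pos (pfun_pos_of_qfun_pos hq)])
      (fun hT => by rw [hg m _ (by omega), hT]; split_ifs <;> simp)
  refine ⟨lam, hlam_nonneg, fun n hn => hlam_zero n (by omega), hlam_one, ?_⟩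
  have hsplit : ∀ n, lam n • j m n = lam n • h m + lam n • g m n := fun n => by
    rcases le_or_gt n m with hn | hn
    · simp [hlam_zero n (by omega)]
    · rw [hj m n hn, smul_add]
  simpa [hsplit] using (hlam_one.smul_const (h m)).add hlam_g

/-- If `θ(f) < ∞` and `m ∈ ℕ`, then `f` is an infinite convex combination of the
approximating functionals `j_{m,n}(f) = h_m(f) + g_{m,n}(f)`, `n > m`, where
`g_{m,n}(f) = (θ(f - h_m(f)) / ρ(G_n(f))) ω_n(f)` if `p_n(f) > 0` and `0` otherwise. -/
theorem convex_combination_of_approximants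
    {X : Type*} [NormedAddCommGroup X] [NormedSpace ℝ X] [CompleteSpace X]
    {Γ : Type*} (P : Γ → X →L[ℝ] X)
    (hproj : ∀ γ, (P γ).comp (P γ) = P γ)
    (hne : ∀ γ, P γ ≠ 0)
    (hdisj : ∀ α β, α ≠ β → (P α).comp (P β) = 0)
    (hbdd : ∃ C : ℝ, ∀ γ, ‖P γ‖ ≤ C)
    (hspanX : (Submodule.span ℝ (⋃ γ, Set.range (P γ))).topologicalClosure = ⊤)
    (hspan_dual : (Submodule.span ℝ
        (⋃ γ, Set.range (fun f : StrongDual ℝ X => f.comp (P γ)))).topologicalClosure = ⊤)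
    (f : StrongDual ℝ X)
    (htheta : theta P f ≠ ⊤)
    (hGfin : ∀ k : ℕ, (Gset P f (k + 1)).Finite)
    (omega : ℕ → StrongDual ℝ X)
    (homega : ∀ k : ℕ,
      omega (k + 1) = ∑ γ ∈ (hGfin k).toFinset, ‖Pstar P γ f‖⁻¹ • Pstar P γ f)
    (h : ℕ → StrongDual ℝ X)
    (hh : ∀ m : ℕ, h m = ∑ k ∈ Finset.range m, qfun P f (k + 1) • omega (k + 1))
    (g : ℕ → ℕ → StrongDual ℝ X)
    (hg : ∀ m n : ℕ, m < n →
      g m n = if 0 < pfun P f n then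
          ((theta P (f - h m)).toReal / (rho P (Gset P f n)).toReal) • omega n
        else 0)
    (j : ℕ → ℕ → StrongDual ℝ X)
    (hj : ∀ m n : ℕ, m < n → j m n = h m + g m n)
    (m : ℕ) :
    ∃ lam : ℕ → ℝ, (∀ n, 0 ≤ lam n) ∧ (∀ n ≤ m, lam n = 0) ∧
      HasSum lam 1 ∧ HasSum (fun n : ℕ => lam n • j m n) f :=
  convex_combination_of_approximants_general P hproj hdisj hbdd hspanX hspan_dual f htheta hGfin
    omega homega h hh g hg j hj m
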